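/- Let ε and ε' be two edge assignments on the hypercube {0,1}ⁿ (functions from edges to ℤ/2 whose sum over each square face is 1). Then there exists a function η from the vertices of the cube to ℤ/2 such that ε'(e) = ε(e) + η(I) + η(J) for every edge e from I to J. Consequently, any two sign assignments yield isomorphic cube complexes via rescaling generators at vertices by (−1)^η. -/
import Mathlib

namespace Stmt6Aux

lemma z2_add_self (a : ZMod 2) : a + a = 0 := by revert a; decide

lemma z2_cases (a : ZMod 2) : a = 0 ∨ a = 1 := by revert a; decide

variable {n : ℕ}

/-- Prefix of `I` up to position `k` (coordinates `≥ k` set to `0`). -/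
def P (I : Fin n → ZMod 2) (k : ℕ) : Fin n → ZMod 2 :=
  fun u => if (u : ℕ) < k then I u else 0

lemma P_all (I : Fin n → ZMod 2) : P I n = I := by
  funext u; simp [P, u.isLt]

lemma P_apply_of_ge (I : Fin n → ZMod 2) {k : ℕ} {u : Fin n} (h : k ≤ (u : ℕ)) :
    P I k u = 0 := by
  simp [P, Nat.not_lt.mpr h]

lemma P_succ_of_zero (I : Fin n → ZMod 2) (t : Fin n) (h : I t = 0) :
    P I ((t : ℕ) + 1) = P I (t : ℕ) := by
  funext u
  simp only [P]
  rcases lt_trichotomy (u : ℕ) (t : ℕ) with h1 | h1 | h1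
  · rw [if_pos h1, if_pos (Nat.lt_succ_of_lt h1)]
  · have hu : u = t := Fin.ext h1
    subst hu
    rw [if_pos (by omega), if_neg (by omega), h]
  · rw [if_neg (by omega), if_neg (by omega)]

lemma P_succ_of_one (I : Fin n → ZMod 2) (t : Fin n) (h : I t = 1) :
    P I ((t : ℕ) + 1) = Function.update (P I (t : ℕ)) t 1 := by
  funext u
  by_cases hu : u = t
  · subst hu
    simp only [Function.update_self, P]
    rw [if_pos (by omega), h]
  · rw [Function.update_of_ne hu]
    simp only [P]
    have : (u : ℕ) ≠ (t : ℕ) := fun hc => hu (Fin.ext hc)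
    rcases lt_or_gt_of_ne this with h1 | h1
    · rw [if_pos h1, if_pos (by omega)]
    · rw [if_neg (by omega), if_neg (by omega)]

lemma P_update_of_le (I : Fin n → ZMod 2) (s : Fin n) {k : ℕ} (h : k ≤ (s : ℕ)) :
    P (Function.update I s 1) k = P I k := by
  funext u
  simp only [P]
  by_cases h1 : (u : ℕ) < k
  · rw [if_pos h1, if_pos h1, Function.update_of_ne (fun hc => by subst hc; omega)]
  · rw [if_neg h1, if_neg h1]

lemma P_update_of_gt (I : Fin n → ZMod 2) (s : Fin n) {k : ℕ} (h : (s : ℕ) < k) :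
    P (Function.update I s 1) k = Function.update (P I k) s 1 := by
  funext u
  by_cases hu : u = s
  · subst hu
    simp only [Function.update_self, P]
    rw [if_pos h]
  · rw [Function.update_of_ne hu]
    simp only [P]
    by_cases h1 : (u : ℕ) < k
    · rw [if_pos h1, if_pos h1, Function.update_of_ne hu]
    · rw [if_neg h1, if_neg h1]

lemma telescope (g : ℕ → ZMod 2) (a b : ℕ) (hab : a ≤ b) :
    ∑ k ∈ Finset.Ico a b, (g (k + 1) + g k) = g b + g a := by
  induction b, hab using Nat.le_induction with
  | base => simp [z2_add_self]
  | succ b hb ih =>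
      rw [Finset.sum_Ico_succ_top hb, ih]
      have := z2_add_self (g b)
      linear_combination this

end Stmt6Aux

/-- Any two edge assignments `ε, ε'` on the hypercube `{0,1}ⁿ`
(functions from edges to `ℤ/2` whose sum over each square face is `1`; an edge
is encoded by its initial vertex `I`, with `I s = 0`, together with the flipped
coordinate `s`, its endpoints being `I` and `update I s 1`) differ by a vertex
function `η`: `ε'(e) = ε(e) + η(I) + η(J)` for every edge `e` from `I` to `J`. -/
theorem stmt_6 (n : ℕ) (ε ε' : (Fin n → ZMod 2) → Fin n → ZMod 2)
    (hε : ∀ (I : Fin n → ZMod 2) (s t : Fin n), s ≠ t → I s = 0 → I t = 0 →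
      ε I s + ε I t + ε (Function.update I t 1) s + ε (Function.update I s 1) t = 1)
    (hε' : ∀ (I : Fin n → ZMod 2) (s t : Fin n), s ≠ t → I s = 0 → I t = 0 →
      ε' I s + ε' I t + ε' (Function.update I t 1) s + ε' (Function.update I s 1) t = 1) :
    ∃ η : (Fin n → ZMod 2) → ZMod 2,
      ∀ (I : Fin n → ZMod 2) (s : Fin n), I s = 0 →
        ε' I s = ε I s + η I + η (Function.update I s 1) := by
  classical
  open Stmt6Aux in
  set δ : (Fin n → ZMod 2) → Fin n → ZMod 2 := fun I s => ε' I s + ε I s with hδdef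
  have key : (1 : ZMod 2) + 1 = 0 := by decide
  have hsq : ∀ (I : Fin n → ZMod 2) (s t : Fin n), s ≠ t → I s = 0 → I t = 0 →
      δ I s + δ I t + δ (Function.update I t 1) s + δ (Function.update I s 1) t = 0 := by
    intro I s t hst hs ht
    have h1 := hε I s t hst hs ht
    have h2 := hε' I s t hst hs ht
    simp only [hδdef]
    linear_combination h1 + h2 + key
  set η : (Fin n → ZMod 2) → ZMod 2 :=
    fun I => ∑ t : Fin n, I t * δ (Stmt6Aux.P I (t : ℕ)) t with hηdef
  refine ⟨η, ?_⟩
  intro I s hs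
  set J := Function.update I s 1 with hJ
  have hJs : J s = 1 := by simp [hJ]
  -- the discrete "line integral" of δ in direction s along the canonical path
  set g : ℕ → ZMod 2 := fun k => δ (Stmt6Aux.P I k) s with hgdef
  suffices hmain : δ I s = η I + η J by
    simp only [hδdef] at hmain
    linear_combination hmain - z2_add_self (ε I s)
  -- termwise identity for η I + η J
  have hterm : ∀ t : Fin n,
      I t * δ (Stmt6Aux.P I (t : ℕ)) t + J t * δ (Stmt6Aux.P J (t : ℕ)) t
        = (if t = s then δ (Stmt6Aux.P I (s : ℕ)) s else 0)
          + (if (s : ℕ) < (t : ℕ) then g ((t : ℕ) + 1) + g (t : ℕ) else 0) := by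
    intro t
    rcases lt_trichotomy (t : ℕ) (s : ℕ) with h1 | h1 | h1
    · -- t < s : the two terms coincide and cancel
      have hts : t ≠ s := fun hc => by subst hc; omega
      rw [if_neg hts, if_neg (by omega)]
      have hJt : J t = I t := Function.update_of_ne hts _ _
      rw [hJ, P_update_of_le I s (by omega), ← hJ, hJt, z2_add_self]
      simp
    · -- t = s
      have hts : t = s := Fin.ext h1
      subst hts
      rw [if_pos rfl, if_neg (by omega)]
      rw [hJ, P_update_of_le I t (le_refl _), ← hJ, hJs, hs, one_mul, zero_mul,
        zero_add, add_zero]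
    · -- s < t
      have hts : t ≠ s := fun hc => by subst hc; omega
      rw [if_neg hts, if_pos h1]
      have hJt : J t = I t := Function.update_of_ne hts _ _
      rw [hJ, P_update_of_gt I s h1, ← hJ, hJt]
      -- square relation at K = P I t
      have hKs : Stmt6Aux.P I (t : ℕ) s = I s := by simp [Stmt6Aux.P, h1]
      have hKt : Stmt6Aux.P I (t : ℕ) t = 0 := P_apply_of_ge I (le_refl _)
      have hsqK := hsq (Stmt6Aux.P I (t : ℕ)) s t (fun hc => hts hc.symm)
        (hKs.trans hs) hKt
      rcases z2_cases (I t) with h0 | h0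
      · rw [h0, zero_mul, zero_mul, add_zero]
        simp only [hgdef]
        have h2 : Stmt6Aux.P I ((t : ℕ) + 1) = Stmt6Aux.P I (t : ℕ) :=
          P_succ_of_zero I t h0
        rw [h2, z2_add_self]
        simp
      · rw [h0, one_mul, one_mul]
        simp only [hgdef]
        have hstep : Stmt6Aux.P I ((t : ℕ) + 1)
            = Function.update (Stmt6Aux.P I (t : ℕ)) t 1 := P_succ_of_one I t h0
        rw [hstep]
        linear_combination hsqK - z2_add_self (δ (Stmt6Aux.P I (t : ℕ)) s)
          - z2_add_self (δ (Function.update (Stmt6Aux.P I (t : ℕ)) t 1) s)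
  -- sum the termwise identity
  have hsum : η I + η J
      = δ (Stmt6Aux.P I (s : ℕ)) s
        + ∑ t : Fin n, (if (s : ℕ) < (t : ℕ) then g ((t : ℕ) + 1) + g (t : ℕ) else 0) := by
    rw [hηdef, ← Finset.sum_add_distrib]
    rw [Finset.sum_congr rfl (fun t _ => hterm t), Finset.sum_add_distrib,
      Finset.sum_ite_eq' Finset.univ s (fun _ => δ (Stmt6Aux.P I (s : ℕ)) s)]
    simp
  -- evaluate the telescoping sum
  have htel : ∑ t : Fin n, (if (s : ℕ) < (t : ℕ) then g ((t : ℕ) + 1) + g (t : ℕ) else 0)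
      = g n + g ((s : ℕ) + 1) := by
    rw [Fin.sum_univ_eq_sum_range (fun k => if (s : ℕ) < k then g (k + 1) + g k else 0) n]
    rw [Finset.range_eq_Ico,
      ← Finset.sum_Ico_consecutive _ (Nat.zero_le ((s : ℕ) + 1)) s.isLt]
    rw [Finset.sum_congr rfl (fun k hk => if_neg (by
      rw [Finset.mem_Ico] at hk; omega)),
      Finset.sum_congr (rfl : Finset.Ico ((s:ℕ)+1) n = _) (fun k hk => if_pos (by
      rw [Finset.mem_Ico] at hk; omega))]
    rw [Finset.sum_const_zero, zero_add, telescope g _ _ s.isLt]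
  have hgn : g n = δ I s := by rw [hgdef]; simp [P_all]
  have hgs : g ((s : ℕ) + 1) = g (s : ℕ) := by
    rw [hgdef]; simp [P_succ_of_zero I s hs]
  rw [hsum, htel, hgn, hgs]
  simp only [hgdef]
  linear_combination - z2_add_self (δ (Stmt6Aux.P I (s : ℕ)) s)
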